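/- arXiv:1303.1994 — 2 statements merged into one kernel-verified Lean document; each statement's English description precedes it below -/
import Mathlib

section
/- Let B be a type and σ : ℕ → B an eventually periodic stream, i.e., there exist N and p > 0 such that σ(n + p) = σ(n) for all n ≥ N. Then there exist a finite type S, a stream coalgebra c : S → B × S and a state s ∈ S whose behaviour equals σ, where the behaviour map beh : S → (ℕ → B) is defined by beh(s)(0) = (c s).1 and beh(s)(n+1) = beh((c s).2)(n). -/
/-!
Take as states the positions `0, …, N + p - 1` of `σ`, arranged as a lasso: each position
outputs `σ i` and steps to `i + 1`, except the last one, which loops back to `N`. By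
finality of streams it suffices that the suffix map `i ↦ (σ (i + n))ₙ` respects the
transitions, and at the loop-back transition this is exactly the periodicity of `σ`.
-/

/-- The behaviour map of a stream coalgebra `c : S → B × S`. -/
def beh {S B : Type*} (c : S → B × S) : S → ℕ → B
  | s, 0 => (c s).1
  | s, n + 1 => beh c (c s).2 n

theorem beh_unique {S B : Type*} (c : S → B × S) (τ : S → ℕ → B)
    (h_head : ∀ s, τ s 0 = (c s).1) (h_tail : ∀ s n, τ (c s).2 n = τ s (n + 1)) :
    beh c = τ := by
  funext s n
  induction n generalizing s with
  | zero => exact (h_head s).symm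
  | succ n ih => rw [beh, ih, h_tail]

section Lasso

variable {B : Type*} {N p : ℕ}

def lassoNext (hp : 0 < p) (i : Fin (N + p)) : Fin (N + p) :=
  if h : i.val + 1 < N + p then ⟨i + 1, h⟩ else ⟨N, by omega⟩

def lassoCoalgebra (σ : ℕ → B) (hp : 0 < p) (i : Fin (N + p)) : B × Fin (N + p) :=
  (σ i, lassoNext hp i)

theorem apply_lassoNext_add {σ : ℕ → B} (hp : 0 < p) (hper : ∀ n ≥ N, σ (n + p) = σ n)
    (i : Fin (N + p)) (n : ℕ) : σ (lassoNext hp i + n : ℕ) = σ (i + (n + 1)) := by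
  unfold lassoNext
  split_ifs with h
  · exact congrArg σ (by simp only; omega)
  · have h_last : i.val + (n + 1) = N + n + p := by omega
    rw [h_last, hper (N + n) (by omega)]

theorem beh_lassoCoalgebra (σ : ℕ → B) (hp : 0 < p) (hper : ∀ n ≥ N, σ (n + p) = σ n) :
    beh (lassoCoalgebra σ hp) = fun (i : Fin (N + p)) n => σ (i + n) :=
  beh_unique _ _ (fun _ => rfl) (apply_lassoNext_add hp hper)

end Lasso

/-- Every eventually periodic stream is the behaviour of a state of some
finite stream coalgebra. -/
theorem eventually_periodic_is_beh {B : Type*} (σ : ℕ → B) (N p : ℕ)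
    (hp : 0 < p) (hper : ∀ n ≥ N, σ (n + p) = σ n) :
    ∃ (S : Type) (_ : Fintype S) (c : S → B × S) (s : S), beh c s = σ := by
  refine ⟨Fin (N + p), inferInstance, lassoCoalgebra σ hp, ⟨0, by omega⟩, ?_⟩
  rw [beh_lassoCoalgebra σ hp hper]
  exact funext fun n => congrArg σ (Nat.zero_add n)
end

section
/- Let α be a finite alphabet and M a deterministic finite automaton over α with a finite state type. Then there exists a regular expression P over α whose language equals the language accepted by M. -/
/-!
McNaughton–Yamada construction. For a set `S` of states, let `R^S_pq = M.pathLang S p q` be the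
language of words whose run leads from `p` to `q` with every intermediate state in `S`. Adding one
state `s` to `S` splits a run at its visits to `s`:
`R^{S ∪ {s}}_pq = R^S_pq + R^S_ps (R^S_ss)∗ R^S_sq`.
Since `R^∅_pq` is a finite sum of letters (plus `1` if `p = q`), induction on `S` shows that every
`R^S_pq` is denoted by a regular expression, and `M.accepts` is the finite sum of
`R^σ_{start,q}` over the accepting states `q`.
-/

open Set
open scoped Computability

namespace Language

variable {α ι : Type*}

theorem mem_sum (s : Finset ι) (L : ι → Language α) (w : List α) :
    w ∈ ∑ i ∈ s, L i ↔ ∃ i ∈ s, w ∈ L i := by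
  classical
  induction s using Finset.induction_on with
  | empty => simp [notMem_zero]
  | insert i s hi ih => rw [Finset.sum_insert hi, mem_add, ih, Finset.exists_mem_insert]

end Language

namespace RegularExpression

variable {α : Type*}

def denotedLanguages : Subsemiring (Language α) where
  carrier := range matches'
  mul_mem' := by
    rintro _ _ ⟨P, rfl⟩ ⟨Q, rfl⟩
    exact ⟨P * Q, matches'_mul P Q⟩
  one_mem' := ⟨1, matches'_epsilon⟩
  add_mem' := by
    rintro _ _ ⟨P, rfl⟩ ⟨Q, rfl⟩
    exact ⟨P + Q, matches'_add P Q⟩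
  zero_mem' := ⟨0, matches'_zero⟩

theorem mem_denotedLanguages {L : Language α} :
    L ∈ denotedLanguages ↔ ∃ P : RegularExpression α, P.matches' = L :=
  Iff.rfl

theorem singleton_mem_denotedLanguages (a : α) : {[a]} ∈ denotedLanguages :=
  ⟨char a, matches'_char a⟩

theorem kstar_mem_denotedLanguages {L : Language α} (h : L ∈ denotedLanguages) :
    L∗ ∈ denotedLanguages := by
  obtain ⟨P, rfl⟩ := h
  exact ⟨P.star, matches'_star P⟩

end RegularExpression

namespace DFA

variable {α σ : Type*} (M : DFA α σ)

inductive PathWithin (S : Set σ) : σ → List α → σ → Prop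
  | nil (p : σ) : PathWithin S p [] p
  | single (p : σ) (a : α) : PathWithin S p [a] (M.step p a)
  | cons {p : σ} {a : α} {w : List α} {q : σ} :
      M.step p a ∈ S → PathWithin S (M.step p a) w q → PathWithin S p (a :: w) q

def pathLang (S : Set σ) (p q : σ) : Language α :=
  {w | M.PathWithin S p w q}

variable {M}

theorem PathWithin.mono {S T : Set σ} (hST : S ⊆ T) {p w q} (h : M.PathWithin S p w q) :
    M.PathWithin T p w q := by
  induction h with
  | nil p => exact .nil p
  | single p a => exact .single p a
  | cons hmem _ ih => exact .cons (hST hmem) ih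

theorem PathWithin.append {S : Set σ} {p r q u v} (hr : r ∈ S) (hu : M.PathWithin S p u r)
    (hv : M.PathWithin S r v q) : M.PathWithin S p (u ++ v) q := by
  induction hu with
  | nil p => exact hv
  | single p a => exact .cons hr hv
  | cons hmem _ ih => exact .cons hmem (ih hr hv)

theorem pathWithin_univ_iff {p w q} : M.PathWithin univ p w q ↔ M.evalFrom p w = q := by
  constructor
  · intro h
    induction h with
    | nil p => rfl
    | single p a => rfl
    | cons _ _ ih => exact ih
  · rintro rfl
    induction w generalizing p with
    | nil => exact .nil p
    | cons a w ih => exact .cons (mem_univ _) ih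

theorem pathLang_mono {S T : Set σ} (hST : S ⊆ T) (p q : σ) :
    M.pathLang S p q ≤ M.pathLang T p q :=
  fun _ h => PathWithin.mono hST h

theorem pathLang_mul_le {S : Set σ} {r : σ} (hr : r ∈ S) (p q : σ) :
    M.pathLang S p r * M.pathLang S r q ≤ M.pathLang S p q := by
  rintro _ ⟨u, hu, v, hv, rfl⟩
  exact PathWithin.append hr hu hv

theorem PathWithin.mem_of_insert {S : Set σ} {s p w q} (h : M.PathWithin (insert s S) p w q) :
    w ∈ M.pathLang S p q + M.pathLang S p s * ((M.pathLang S s s)∗ * M.pathLang S s q) := by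
  induction h with
  | nil p => exact Or.inl (.nil p)
  | single p a => exact Or.inl (.single p a)
  | @cons p a w q hmem _ ih =>
    rcases hmem with hs | hS
    · have hloop : M.pathLang S s q + M.pathLang S s s * ((M.pathLang S s s)∗ * M.pathLang S s q)
          = (M.pathLang S s s)∗ * M.pathLang S s q := by
        rw [← mul_assoc, ← one_add_mul, one_add_mul_kstar]
      rw [hs, hloop] at ih
      exact Or.inr (Language.append_mem_mul (a := [a]) (hs ▸ .single p a) ih)
    · rcases ih with h | h
      · exact Or.inl (.cons hS h)
      · obtain ⟨u, hu, v, hv, rfl⟩ := Language.mem_mul.1 h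
        exact Or.inr (Language.append_mem_mul (a := a :: u) (.cons hS hu) hv)

variable (M)

theorem pathLang_empty [Fintype α] [DecidableEq σ] (p q : σ) :
    M.pathLang ∅ p q = (if p = q then 1 else 0) + ∑ a with M.step p a = q, {[a]} := by
  ext w
  rw [Language.mem_add, Language.mem_sum]
  constructor
  · rintro (_ | _ | ⟨⟨⟩, _⟩)
    · simp [Language.mem_one]
    · exact Or.inr ⟨_, Finset.mem_filter.2 ⟨Finset.mem_univ _, rfl⟩, rfl⟩
  · rintro (h | ⟨a, ha, rfl⟩)
    · split_ifs at h with hpq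
      · rw [(Language.mem_one w).1 h, hpq]
        exact .nil q
      · exact absurd h (Language.notMem_zero w)
    · rw [← (Finset.mem_filter.1 ha).2]
      exact .single p a

theorem pathLang_insert (S : Set σ) (s p q : σ) :
    M.pathLang (insert s S) p q =
      M.pathLang S p q + M.pathLang S p s * ((M.pathLang S s s)∗ * M.pathLang S s q) := by
  refine le_antisymm (fun w hw => PathWithin.mem_of_insert hw) ?_
  set T := insert s S
  have hST : S ⊆ T := subset_insert s S
  have hs : s ∈ T := mem_insert s S
  refine add_le (pathLang_mono hST p q) ?_
  calc M.pathLang S p s * ((M.pathLang S s s)∗ * M.pathLang S s q)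
      ≤ M.pathLang T p s * ((M.pathLang T s s)∗ * M.pathLang T s q) := by
        gcongr <;> exact pathLang_mono hST _ _
    _ ≤ M.pathLang T p s * M.pathLang T s q := by
        gcongr
        exact kstar_mul_le_self (pathLang_mul_le hs s q)
    _ ≤ M.pathLang T p q := pathLang_mul_le hs p q

theorem accepts_eq_sum_pathLang [Fintype σ] [DecidablePred (· ∈ M.accept)] :
    M.accepts = ∑ q with q ∈ M.accept, M.pathLang univ M.start q := by
  ext w
  rw [mem_accepts, Language.mem_sum]
  constructor
  · exact fun h => ⟨_, Finset.mem_filter.2 ⟨Finset.mem_univ _, h⟩, pathWithin_univ_iff.2 rfl⟩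
  · rintro ⟨q, hq, hw⟩
    rw [eval, pathWithin_univ_iff.1 hw]
    exact (Finset.mem_filter.1 hq).2

theorem pathLang_mem_denotedLanguages [Fintype α] (S : Finset σ) (p q : σ) :
    M.pathLang S p q ∈ RegularExpression.denotedLanguages := by
  classical
  induction S using Finset.induction_on generalizing p q with
  | empty =>
    rw [Finset.coe_empty, pathLang_empty]
    refine add_mem ?_ (sum_mem fun a _ => RegularExpression.singleton_mem_denotedLanguages a)
    split_ifs
    exacts [one_mem _, zero_mem _]
  | insert s S _ ih =>
    rw [Finset.coe_insert, pathLang_insert]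
    exact add_mem (ih p q)
      (mul_mem (ih p s) (mul_mem (RegularExpression.kstar_mem_denotedLanguages (ih s s)) (ih s q)))

end DFA

/-- Kleene's theorem, other direction: the language accepted by a DFA with
finitely many states over a finite alphabet is denoted by some regular
expression. -/
theorem dfa_to_regex {α σ : Type*} [Fintype α] [Fintype σ] (M : DFA α σ) :
    ∃ P : RegularExpression α, P.matches' = M.accepts := by
  classical
  rw [← RegularExpression.mem_denotedLanguages, M.accepts_eq_sum_pathLang]
  refine sum_mem fun q _ => ?_
  simpa using M.pathLang_mem_denotedLanguages Finset.univ M.start q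
end
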